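/- Let n, s ∈ ℤ with s ≥ 2, and suppose 6s < n + 1 if n is odd, and 6s < n if n is even. Then P(n,s) is a Delaunay polytope of V⁴_{n,s} with respect to q_{n,s}: q_{n,s}(v − v_{n,s}) = 3s/2 for every v ∈ S(n,s), and q_{n,s}(u − v_{n,s}) > 3s/2 for every u ∈ V⁴_{n,s} \ S(n,s). -/

import Mathlib

/-!
Write `cᵢ` for the weights of `q = q_{n,s}` and `v = v_{n,s}`, `t = t_{n,s}`, `w = w_{n,s}`.
For `x` with `Σ xᵢ = s` one has the identity `q(x - v) = 3s/2 + Σ cᵢ xᵢ (xᵢ - 1)`, and on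
integers `xᵢ (xᵢ - 1) ≥ 0` with equality exactly at `0, 1`: this settles `W(n+1,s)` and the rest
of `V_{n,s}`. Since `2v - t` is a `0/1`-vector of sum `2s`, `t + V_{n,s} = 2v - V_{n,s}`; the
point reflection in `v` preserves `q(· - v)` and swaps the two halves of `S(n,s)`, which settles
`V²_{n,s}`. Finally, the `e₁`-term of `w` is integral by the parity of `n`, so for
`u ∈ w + V²_{n,s}` the vector `u - v` has half-integer coordinates on a block of `2s` indices of
weight `2` and on the last `n + 1 - m₀` indices (`m₀ = 4s` or `4s + 1`). Each such coordinate
contributes at least `cᵢ/4`, so `q(u - v) ≥ s + (n + 1 - m₀)/4 > 3s/2`.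
-/

open Finset

noncomputable section

/-- The lattice `A_n = {x ∈ ℤ^{n+1} : Σ x_i = 0}`, viewed inside `ℝ^{n+1}`. -/
def latticeA (n : ℕ) : Set (Fin (n+1) → ℝ) :=
  {x | (∀ i, ∃ m : ℤ, x i = m) ∧ ∑ i, x i = 0}

/-- The point lattice `V_{n,s} = {x ∈ ℤ^{n+1} : Σ x_i = s}`. -/
def Vset (n s : ℕ) : Set (Fin (n+1) → ℝ) :=
  {x | (∀ i, ∃ m : ℤ, x i = m) ∧ ∑ i, x i = (s : ℝ)}

/-- The vertex set `W(n+1,s) = {x ∈ {0,1}^{n+1} : Σ x_i = s}`. -/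
def Wset (n s : ℕ) : Set (Fin (n+1) → ℝ) :=
  {x | (∀ i, x i = 0 ∨ x i = 1) ∧ ∑ i, x i = (s : ℝ)}

/-- The vector `v_{n,s} = ((1/4)^{4s}; 0^{n+1-4s})`. -/
def vns (n s : ℕ) : Fin (n+1) → ℝ := fun i => if (i : ℕ) < 4 * s then 1 / 4 else 0

/-- The vector `t_{n,s} = ((1/2)^{2s}; (−1/2)^{2s}; 0^{n+1-4s})`. -/
def tns (n s : ℕ) : Fin (n+1) → ℝ := fun i =>
  if (i : ℕ) < 2 * s then 1 / 2 else if (i : ℕ) < 4 * s then -(1 / 2) else 0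

/-- The point lattice `V²_{n,s} = V_{n,s} ∪ (t_{n,s} + V_{n,s})`. -/
def V2 (n s : ℕ) : Set (Fin (n+1) → ℝ) :=
  Vset n s ∪ (fun x => tns n s + x) '' Vset n s

/-- The vertex set `S(n,s) = W(n+1,s) ∪ {2v_{n,s} − v : v ∈ W(n+1,s)}`
of the polytope `P(n,s)`. -/
def Sns (n s : ℕ) : Set (Fin (n+1) → ℝ) :=
  Wset n s ∪ (fun v => (2 : ℝ) • vns n s - v) '' Wset n s

/-- The quadratic form `q_{n,s}(x) = 2 Σ_{i<4s} x_i² + Σ_{i≥4s} x_i²`. -/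
def qns (n s : ℕ) (x : Fin (n+1) → ℝ) : ℝ :=
  ∑ i : Fin (n+1), (if (i : ℕ) < 4 * s then (2:ℝ) else 1) * (x i) ^ 2

/-- The standard basis vector `e_1` (1 in coordinate index 1). -/
def e1 (n : ℕ) : Fin (n+1) → ℝ := fun i => if (i : ℕ) = 1 then 1 else 0

/-- For `n` odd, the vector
`w_{n,s} = ((1/4)^{2s}; (−1/4)^{2s}; (1/2)^{n+1−4s}) − ((n+1−4s)/2)·e_1`. -/
def wOdd (n s : ℕ) : Fin (n+1) → ℝ := fun i =>
  (if (i : ℕ) < 2 * s then 1 / 4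
   else if (i : ℕ) < 4 * s then -(1 / 4) else 1 / 2)
  - (((n : ℝ) + 1 - 4 * s) / 2) * e1 n i

/-- For `n` even, the vector
`w_{n,s} = ((1/4)^{2s}; (−1/4)^{2s}; 0; (1/2)^{n−4s}) − ((n−4s)/2)·e_1`. -/
def wEven (n s : ℕ) : Fin (n+1) → ℝ := fun i =>
  (if (i : ℕ) < 2 * s then 1 / 4
   else if (i : ℕ) < 4 * s then -(1 / 4)
   else if (i : ℕ) = 4 * s then 0 else 1 / 2)
  - (((n : ℝ) - 4 * s) / 2) * e1 n i

/-- The vector `w_{n,s}`, defined according to the parity of `n`. -/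
def wns (n s : ℕ) : Fin (n+1) → ℝ := if Odd n then wOdd n s else wEven n s

/-- The point lattice `V⁴_{n,s} = V²_{n,s} ∪ (w_{n,s} + V²_{n,s})`. -/
def V4 (n s : ℕ) : Set (Fin (n+1) → ℝ) :=
  V2 n s ∪ (fun x => wns n s + x) '' V2 n s

theorem sum_ite_val_lt {M : Type*} [AddCommMonoid M] {N k : ℕ} (hk : k ≤ N) (c : M) :
    ∑ i : Fin N, (if (i : ℕ) < k then c else 0) = k • c := by
  rw [← Finset.sum_filter, sum_const, Fin.card_filter_val_lt, min_eq_right hk]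

theorem mul_sub_one_nonneg_of_int {a : ℝ} (ha : ∃ m : ℤ, a = m) : 0 ≤ a * (a - 1) := by
  obtain ⟨m, rfl⟩ := ha
  have : (0 : ℤ) ≤ m * (m - 1) := by
    rcases le_or_gt m 0 with h | h <;> nlinarith
  exact_mod_cast this

theorem mul_sub_one_pos_of_int {a : ℝ} (ha : ∃ m : ℤ, a = m) (h0 : a ≠ 0) (h1 : a ≠ 1) :
    0 < a * (a - 1) := by
  obtain ⟨m, rfl⟩ := ha
  have h0 : m ≠ 0 := by exact_mod_cast h0
  have h1 : m ≠ 1 := by exact_mod_cast h1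
  have : (0 : ℤ) < m * (m - 1) := by
    rcases le_or_gt m 0 with h | h
    · nlinarith [show m ≤ -1 by omega]
    · nlinarith [show 2 ≤ m by omega]
  exact_mod_cast this

def IsHalfInt (a : ℝ) : Prop := ∃ m : ℤ, a = m + 1 / 2

theorem IsHalfInt.quarter_le_sq {a : ℝ} (ha : IsHalfInt a) : 1 / 4 ≤ a ^ 2 := by
  obtain ⟨m, rfl⟩ := ha
  have := mul_sub_one_nonneg_of_int (a := m + 1) ⟨m + 1, by push_cast; rfl⟩
  nlinarith

theorem IsHalfInt.add_int {a b : ℝ} (ha : IsHalfInt a) (hb : ∃ m : ℤ, b = m) :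
    IsHalfInt (a + b) := by
  obtain ⟨k, rfl⟩ := ha
  obtain ⟨m, rfl⟩ := hb
  exact ⟨k + m, by push_cast; ring⟩

section Distances

variable {n s : ℕ}

theorem qns_sub_vns_eq (h4 : 4 * s ≤ n + 1) {x : Fin (n + 1) → ℝ} (hx : ∑ i, x i = s) :
    qns n s (x - vns n s) =
      3 * (s : ℝ) / 2 + ∑ i : Fin (n + 1),
        (if (i : ℕ) < 4 * s then (2 : ℝ) else 1) * (x i * (x i - 1)) := by
  have hterm : ∀ i : Fin (n + 1),
      (if (i : ℕ) < 4 * s then (2 : ℝ) else 1) * ((x - vns n s) i) ^ 2 =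
        (if (i : ℕ) < 4 * s then (2 : ℝ) else 1) * (x i * (x i - 1)) + x i +
          (if (i : ℕ) < 4 * s then 1 / 8 else 0) := by
    intro i
    simp only [Pi.sub_apply, vns]
    split_ifs <;> ring
  simp only [qns, hterm, sum_add_distrib, hx, sum_ite_val_lt h4, nsmul_eq_mul]
  push_cast
  ring

theorem qns_sub_vns_of_mem_Wset (h4 : 4 * s ≤ n + 1) {x : Fin (n + 1) → ℝ}
    (hx : x ∈ Wset n s) : qns n s (x - vns n s) = 3 * (s : ℝ) / 2 := by
  rw [qns_sub_vns_eq h4 hx.2, add_eq_left]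
  refine sum_eq_zero fun i _ => ?_
  rcases hx.1 i with h | h <;> simp [h]

theorem lt_qns_sub_vns_of_mem_Vset (h4 : 4 * s ≤ n + 1) {x : Fin (n + 1) → ℝ}
    (hx : x ∈ Vset n s) (hW : x ∉ Wset n s) : 3 * (s : ℝ) / 2 < qns n s (x - vns n s) := by
  obtain ⟨i₀, h0, h1⟩ : ∃ i, x i ≠ 0 ∧ x i ≠ 1 := by
    by_contra! h
    exact hW ⟨fun i => or_iff_not_imp_left.mpr (h i), hx.2⟩
  rw [qns_sub_vns_eq h4 hx.2, lt_add_iff_pos_right]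
  refine sum_pos' (fun i _ => ?_) ⟨i₀, mem_univ _, ?_⟩
  · exact mul_nonneg (by positivity) (mul_sub_one_nonneg_of_int (hx.1 i))
  · exact mul_pos (by positivity) (mul_sub_one_pos_of_int (hx.1 i₀) h0 h1)

theorem qns_neg (x : Fin (n + 1) → ℝ) : qns n s (-x) = qns n s x := by
  simp [qns]

theorem qns_reflect_vns (x : Fin (n + 1) → ℝ) :
    qns n s ((2 : ℝ) • vns n s - x - vns n s) = qns n s (x - vns n s) := by
  rw [← qns_neg, neg_sub, two_smul]
  congr 1
  abel

theorem two_smul_vns_sub_tns_add_mem_Vset (h4 : 4 * s ≤ n + 1) {x : Fin (n + 1) → ℝ}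
    (hx : x ∈ Vset n s) : (2 : ℝ) • vns n s - (tns n s + x) ∈ Vset n s := by
  have hcoord : ∀ i : Fin (n + 1), ((2 : ℝ) • vns n s - tns n s) i =
      (if (i : ℕ) < 4 * s then 1 else 0) - (if (i : ℕ) < 2 * s then 1 else 0) := by
    intro i
    simp only [Pi.sub_apply, Pi.smul_apply, smul_eq_mul, vns, tns]
    split_ifs <;> first | omega | norm_num
  rw [← sub_sub]
  refine ⟨fun i => ?_, ?_⟩
  · obtain ⟨m, hm⟩ := hx.1 i
    refine ⟨(if (i : ℕ) < 4 * s then 1 else 0) - (if (i : ℕ) < 2 * s then 1 else 0) - m, ?_⟩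
    rw [Pi.sub_apply, hcoord, hm]
    push_cast
    rfl
  · simp only [Pi.sub_apply, hcoord, sum_sub_distrib, hx.2,
      sum_ite_val_lt h4, sum_ite_val_lt (show 2 * s ≤ n + 1 by omega), nsmul_eq_mul]
    push_cast
    ring

theorem lt_qns_sub_vns_of_mem_V2 (h4 : 4 * s ≤ n + 1) {u : Fin (n + 1) → ℝ}
    (hu : u ∈ V2 n s) (hS : u ∉ Sns n s) : 3 * (s : ℝ) / 2 < qns n s (u - vns n s) := by
  rcases hu with hu | ⟨x, hx, rfl⟩
  · exact lt_qns_sub_vns_of_mem_Vset h4 hu fun hW => hS (Or.inl hW)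
  · beta_reduce at hS ⊢
    set y := (2 : ℝ) • vns n s - (tns n s + x)
    have hyW : y ∉ Wset n s := fun hW => hS (Or.inr ⟨y, hW, sub_sub_cancel _ _⟩)
    have hreflect : tns n s + x = (2 : ℝ) • vns n s - y := (sub_sub_cancel _ _).symm
    rw [hreflect, qns_reflect_vns]
    exact lt_qns_sub_vns_of_mem_Vset h4 (two_smul_vns_sub_tns_add_mem_Vset h4 hx) hyW

end Distances

section HalfIntegers

variable {n s : ℕ}

theorem le_qns_of_isHalfInt {a b m₀ : ℕ} (hab : a ≤ b) (hb : b ≤ 4 * s) (hm₀ : 4 * s ≤ m₀)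
    (hm₀n : m₀ ≤ n + 1) {y : Fin (n + 1) → ℝ}
    (hblock : ∀ i : Fin (n + 1), a ≤ (i : ℕ) → (i : ℕ) < b → IsHalfInt (y i))
    (htail : ∀ i : Fin (n + 1), m₀ ≤ (i : ℕ) → IsHalfInt (y i)) :
    ((b : ℝ) - a) / 2 + ((n : ℝ) + 1 - m₀) / 4 ≤ qns n s y := by
  have hterm : ∀ i : Fin (n + 1),
      ((if (i : ℕ) < b then (1 / 2 : ℝ) else 0) - (if (i : ℕ) < a then 1 / 2 else 0)) +
        (1 / 4 - (if (i : ℕ) < m₀ then 1 / 4 else 0)) ≤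
      (if (i : ℕ) < 4 * s then (2 : ℝ) else 1) * y i ^ 2 := by
    intro i
    have := sq_nonneg (y i)
    split_ifs <;> first
      | omega
      | linarith
      | linarith [(hblock i (by omega) (by omega)).quarter_le_sq]
      | linarith [(htail i (by omega)).quarter_le_sq]
  have hsum := sum_le_sum fun i (_ : i ∈ univ) => hterm i
  simp only [sum_add_distrib, sum_sub_distrib, sum_ite_val_lt hm₀n,
    sum_ite_val_lt (show b ≤ n + 1 by omega), sum_ite_val_lt (show a ≤ n + 1 by omega),
    sum_const, card_univ, Fintype.card_fin, nsmul_eq_mul] at hsum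
  push_cast at hsum
  rw [qns]
  linarith

/-- A representative of `w_{n,s}` modulo `ℤ^{n+1}`: its half-integer tail starts at `m₀`,
which is `4s` for odd `n` and `4s + 1` for even `n`. -/
def wFrac (n s m₀ : ℕ) : Fin (n + 1) → ℝ := fun i =>
  if (i : ℕ) < 2 * s then 1 / 4
  else if (i : ℕ) < 4 * s then -(1 / 4) else if (i : ℕ) < m₀ then 0 else 1 / 2

theorem lt_qns_add_sub_vns_of_mem_V2 {m₀ : ℕ} (hm₀ : 4 * s ≤ m₀) (hm₀n : m₀ + 2 * s < n + 1)
    {w : Fin (n + 1) → ℝ} (hw : ∀ i, ∃ m : ℤ, w i = m + wFrac n s m₀ i)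
    {y : Fin (n + 1) → ℝ} (hy : y ∈ V2 n s) :
    3 * (s : ℝ) / 2 < qns n s (w + y - vns n s) := by
  have hlt : 3 * (s : ℝ) / 2 < (2 * s : ℝ) / 2 + ((n : ℝ) + 1 - m₀) / 4 := by
    have : (m₀ : ℝ) + 2 * s < n + 1 := by exact_mod_cast hm₀n
    linarith
  have hm₀' : m₀ ≤ n + 1 := by omega
  have hcoord : ∀ {y : Fin (n + 1) → ℝ} {i : Fin (n + 1)} (c : ℝ), (∃ k : ℤ, y i = k + c) →
      IsHalfInt (wFrac n s m₀ i + c - vns n s i) → IsHalfInt ((w + y - vns n s) i) := by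
    rintro y i c ⟨k, hk⟩ hc
    obtain ⟨m, hm⟩ := hw i
    convert hc.add_int ⟨m + k, rfl⟩ using 1
    simp only [Pi.sub_apply, Pi.add_apply, hm, hk]
    push_cast
    ring
  rcases hy with ⟨hx, -⟩ | ⟨x, ⟨hx, -⟩, rfl⟩
  · refine hlt.trans_le (le_of_eq_of_le (by push_cast; ring)
      (le_qns_of_isHalfInt (a := 2 * s) (b := 4 * s) (by omega) le_rfl hm₀ hm₀' ?_ ?_))
    · intro i hi2 hi4
      refine hcoord 0 (by simpa using hx i) ⟨-1, ?_⟩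
      simp only [wFrac, vns, if_neg (not_lt.2 hi2), if_pos hi4]
      norm_num
    · intro i hi
      refine hcoord 0 (by simpa using hx i) ⟨0, ?_⟩
      simp only [wFrac, vns, if_neg (show ¬ (i : ℕ) < 2 * s by omega),
        if_neg (show ¬ (i : ℕ) < 4 * s by omega), if_neg (not_lt.2 hi)]
      norm_num
  · refine hlt.trans_le (le_of_eq_of_le (by push_cast; ring)
      (le_qns_of_isHalfInt (a := 0) (b := 2 * s) (by omega) (by omega) hm₀ hm₀' ?_ ?_))
    · intro i _ hi2
      obtain ⟨k, hk⟩ := hx i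
      refine hcoord (tns n s i) ⟨k, by simp only [Pi.add_apply, hk, add_comm]⟩ ⟨0, ?_⟩
      simp only [wFrac, vns, tns, if_pos hi2, if_pos (show (i : ℕ) < 4 * s by omega)]
      norm_num
    · intro i hi
      obtain ⟨k, hk⟩ := hx i
      refine hcoord (tns n s i) ⟨k, by simp only [Pi.add_apply, hk, add_comm]⟩ ⟨0, ?_⟩
      simp only [wFrac, vns, tns, if_neg (show ¬ (i : ℕ) < 2 * s by omega),
        if_neg (show ¬ (i : ℕ) < 4 * s by omega), if_neg (not_lt.2 hi)]
      norm_num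

end HalfIntegers

theorem wOdd_eq_int_add_wFrac {n : ℕ} (s : ℕ) (hn : Odd n) (i : Fin (n + 1)) :
    ∃ m : ℤ, wOdd n s i = m + wFrac n s (4 * s) i := by
  obtain ⟨p, rfl⟩ := hn
  refine ⟨if (i : ℕ) = 1 then 2 * s - p - 1 else 0, ?_⟩
  simp only [wOdd, wFrac, e1]
  split_ifs <;> first | omega | (push_cast; ring)

theorem wEven_eq_int_add_wFrac {n : ℕ} (s : ℕ) (hn : Even n) (i : Fin (n + 1)) :
    ∃ m : ℤ, wEven n s i = m + wFrac n s (4 * s + 1) i := by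
  obtain ⟨p, rfl⟩ := hn
  refine ⟨if (i : ℕ) = 1 then 2 * s - p else 0, ?_⟩
  simp only [wEven, wFrac, e1]
  split_ifs <;> first | omega | (push_cast; ring)

theorem exists_wns_eq_int_add_wFrac {n s : ℕ}
    (hodd : Odd n → 6 * s < n + 1) (heven : Even n → 6 * s < n) :
    ∃ m₀, 4 * s ≤ m₀ ∧ m₀ + 2 * s < n + 1 ∧ ∀ i, ∃ m : ℤ, wns n s i = m + wFrac n s m₀ i := by
  rcases Nat.even_or_odd n with hn | hn
  · refine ⟨4 * s + 1, by omega, by have := heven hn; omega, fun i => ?_⟩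
    rw [wns, if_neg (Nat.not_odd_iff_even.2 hn)]
    exact wEven_eq_int_add_wFrac s hn i
  · refine ⟨4 * s, le_rfl, by have := hodd hn; omega, fun i => ?_⟩
    rw [wns, if_pos hn]
    exact wOdd_eq_int_add_wFrac s hn i

theorem Pns_delaunay_in_V4_general (n s : ℕ)
    (hodd : Odd n → 6 * s < n + 1) (heven : Even n → 6 * s < n) :
    (∀ v ∈ Sns n s, qns n s (v - vns n s) = 3 * (s : ℝ) / 2) ∧
    (∀ u ∈ V4 n s \ Sns n s, 3 * (s : ℝ) / 2 < qns n s (u - vns n s)) := by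
  obtain ⟨m₀, hm₀, hm₀n, hw⟩ := exists_wns_eq_int_add_wFrac hodd heven
  have h4 : 4 * s ≤ n + 1 := by omega
  refine ⟨?_, ?_⟩
  · rintro v (hv | ⟨x, hx, rfl⟩)
    · exact qns_sub_vns_of_mem_Wset h4 hv
    · rw [qns_reflect_vns, qns_sub_vns_of_mem_Wset h4 hx]
  · rintro u ⟨hu | ⟨y, hy, rfl⟩, hS⟩
    · exact lt_qns_sub_vns_of_mem_V2 h4 hu hS
    · exact lt_qns_add_sub_vns_of_mem_V2 hm₀ hm₀n hw hy

/-- If `6s < n+1` (`n` odd) resp. `6s < n` (`n` even), then `P(n,s)` is a Delaunay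
polytope of the larger lattice `V⁴_{n,s}` with respect to `q_{n,s}`. -/
theorem Pns_delaunay_in_V4 (n s : ℕ) (hs : 2 ≤ s)
    (hodd : Odd n → 6 * s < n + 1) (heven : Even n → 6 * s < n) :
    (∀ v ∈ Sns n s, qns n s (v - vns n s) = 3 * (s : ℝ) / 2) ∧
    (∀ u ∈ V4 n s \ Sns n s, 3 * (s : ℝ) / 2 < qns n s (u - vns n s)) :=
  Pns_delaunay_in_V4_general n s hodd heven
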